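/- (Corollary 1) The FIE is RGAS if: (a) the system x⁺ = f(x,w), y = h(x) + v is i-IOSS; (b) the FIE cost V_t satisfies Assumption 1 and its infimum is attainable at each time t (so V_t(x̂(0|t) − x̄₀, ŵ_t) ≤ V_t(x₀ − x̄₀, w)); and (c) the KL-function β of the i-IOSS property and ρ̲ₓ, ρₓ of Assumption 1 are K·L-functions of the form β(s,t) = μ₁(s)·φ₁(t), ρ̲ₓ(s,t) = μ₂(s)·φ₂(t), ρₓ(s,t) = μ₃(s)·φ₂(t), where μ₁, μ₂, μ₃ are K-functions with μ₂ a K∞-function, φ₁, φ₂ are L-functions with φ₂(t) > 0 for all t, and for every K-function π there exists a K-function π′ such that μ₁(4·μ₂⁻¹(π(s)/φ₂(t)))·φ₁(t) ≤ π′(s) for all s, t ≥ 0. -/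

import Mathlib

open Filter Topology

/-- A K-function: continuous on [0,∞), strictly increasing on [0,∞), zero at zero. -/
def IsKFun (α : ℝ → ℝ) : Prop :=
  ContinuousOn α (Set.Ici 0) ∧ StrictMonoOn α (Set.Ici 0) ∧ α 0 = 0

/-- A K∞-function: a K-function tending to ∞ at ∞. -/
def IsKInftyFun (α : ℝ → ℝ) : Prop :=
  IsKFun α ∧ Tendsto α atTop atTop

/-- An L-function: continuous on [0,∞), nonincreasing on [0,∞), tending to 0 at ∞. -/
def IsLFun (φ : ℝ → ℝ) : Prop :=
  ContinuousOn φ (Set.Ici 0) ∧ AntitoneOn φ (Set.Ici 0) ∧ Tendsto φ atTop (𝓝 0)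

/-- A KL-function. -/
def IsKLFun (β : ℝ → ℝ → ℝ) : Prop :=
  (∀ t, 0 ≤ t → IsKFun fun s => β s t) ∧ (∀ s, 0 ≤ s → IsLFun fun t => β s t)

/-- Solution of the discrete-time system `x⁺ = f(x,w)`. -/
def traj {X W : Type*} (f : X → W → X) (x0 : X) (w : ℕ → W) : ℕ → X
  | 0 => x0
  | t + 1 => f (traj f x0 w t) (w t)

/-- `seqSup z m = max_{0 ≤ i < m} ‖z i‖` (0 when the index range is empty), so
`‖z‖_{0:t-1} = seqSup z t` and `‖z‖_{0:t} = seqSup z (t+1)`. -/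
noncomputable def seqSup {E : Type*} [SeminormedAddGroup E] (z : ℕ → E) (m : ℕ) : ℝ :=
  (((Finset.range m).sup fun i => ‖z i‖₊ : NNReal) : ℝ)

/-! Optimality sandwiches the cost of the estimate between the lower bound of Assumption 1 at the
estimate and the upper bound at the true data:
`μ₂(|x̂₀ - x̄₀|)φ₂(t) + γ̲_w(‖ŵ‖) + γ̲_v(‖ν̂‖) ≤ R := μ₃(|x₀ - x̄₀|)φ₂(t) + γ_w(‖w‖) + γ_v(‖v‖)`.
Inverting the lower comparison functions bounds the offset `|x̂₀ - x̄₀|` by `μ₂⁻¹(R / φ₂(t))` and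
the fitted disturbances by `γ̲⁻¹(R)`. These enter the i-IOSS inequality between the true and the
estimated trajectory; splitting sums with the weak triangle inequality
`α(a + b + c) ≤ α(3a) + α(3b) + α(3c)` of K-functions leaves, besides K-functions of `‖w‖`, `‖v‖`
and a KL-function of `|x₀ - x̄₀|`, the terms `μ₁(4μ₂⁻¹(3γ_w(‖w‖) / φ₂(t)))φ₁(t)` (and likewise
for `v`), in which `1 / φ₂(t)` blows up. Condition (c) bounds exactly these by K-functions. -/

open Set

namespace IsKFun

variable {α β : ℝ → ℝ}

theorem nonneg (hα : IsKFun α) {s : ℝ} (hs : 0 ≤ s) : 0 ≤ α s :=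
  hα.2.2 ▸ hα.2.1.monotoneOn self_mem_Ici hs hs

theorem mono (hα : IsKFun α) {a b : ℝ} (ha : 0 ≤ a) (hab : a ≤ b) : α a ≤ α b :=
  hα.2.1.monotoneOn ha (ha.trans hab) hab

theorem mapsTo (hα : IsKFun α) : MapsTo α (Ici 0) (Ici 0) := fun _ hs => hα.nonneg hs

theorem comp (hα : IsKFun α) (hβ : IsKFun β) : IsKFun fun s => α (β s) :=
  ⟨hα.1.comp hβ.1 hβ.mapsTo, hα.2.1.comp hβ.2.1 hβ.mapsTo, by simp only [hβ.2.2, hα.2.2]⟩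

theorem add (hα : IsKFun α) (hβ : IsKFun β) : IsKFun fun s => α s + β s :=
  ⟨hα.1.add hβ.1, fun _ ha _ hb hab => add_lt_add (hα.2.1 ha hb hab) (hβ.2.1 ha hb hab),
    by simp only [hα.2.2, hβ.2.2, add_zero]⟩

theorem mul_const (hα : IsKFun α) {c : ℝ} (hc : 0 < c) : IsKFun fun s => α s * c :=
  ⟨hα.1.mul continuousOn_const,
    fun _ ha _ hb hab => mul_lt_mul_of_pos_right (hα.2.1 ha hb hab) hc,
    by simp only [hα.2.2, zero_mul]⟩

theorem mul_const_add (hα : IsKFun α) {c : ℝ} (hc : 0 ≤ c) (hβ : IsKFun β) :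
    IsKFun fun s => α s * c + β s :=
  ⟨(hα.1.mul continuousOn_const).add hβ.1, fun _ ha _ hb hab =>
    add_lt_add_of_le_of_lt (mul_le_mul_of_nonneg_right (hα.mono ha hab.le) hc)
      (hβ.2.1 ha hb hab),
    by simp only [hα.2.2, hβ.2.2, zero_mul, add_zero]⟩

theorem apply_sum_le (hα : IsKFun α) {ι : Type*} (s : Finset ι) {a : ι → ℝ}
    (ha : ∀ i ∈ s, 0 ≤ a i) : α (∑ i ∈ s, a i) ≤ ∑ i ∈ s, α (s.card * a i) := by
  rcases s.eq_empty_or_nonempty with rfl | hs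
  · simp [hα.2.2]
  obtain ⟨j, hj, hmax⟩ := s.exists_max_image a hs
  have hsum : ∑ i ∈ s, a i ≤ s.card * a j := by
    simpa using Finset.sum_le_card_nsmul s a (a j) hmax
  calc α (∑ i ∈ s, a i) ≤ α (s.card * a j) := hα.mono (Finset.sum_nonneg ha) hsum
    _ ≤ ∑ i ∈ s, α (s.card * a i) :=
      Finset.single_le_sum (f := fun i => α (s.card * a i))
        (fun i hi => hα.nonneg (mul_nonneg (Nat.cast_nonneg _) (ha i hi))) hj

theorem apply_add_le (hα : IsKFun α) {a b : ℝ} (ha : 0 ≤ a) (hb : 0 ≤ b) :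
    α (a + b) ≤ α (2 * a) + α (2 * b) := by
  simpa [Fin.sum_univ_two] using
    hα.apply_sum_le Finset.univ (a := ![a, b]) (by simp [Fin.forall_fin_two, ha, hb])

theorem apply_add_add_le (hα : IsKFun α) {a b c : ℝ} (ha : 0 ≤ a) (hb : 0 ≤ b) (hc : 0 ≤ c) :
    α (a + b + c) ≤ α (3 * a) + α (3 * b) + α (3 * c) := by
  simpa [Fin.sum_univ_three] using
    hα.apply_sum_le Finset.univ (a := ![a, b, c]) (by simp [Fin.forall_fin_succ, ha, hb, hc])

theorem apply_add_add_add_le (hα : IsKFun α) {a b c d : ℝ} (ha : 0 ≤ a) (hb : 0 ≤ b)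
    (hc : 0 ≤ c) (hd : 0 ≤ d) :
    α (a + b + c + d) ≤ α (4 * a) + α (4 * b) + α (4 * c) + α (4 * d) := by
  simpa [Fin.sum_univ_four] using
    hα.apply_sum_le Finset.univ (a := ![a, b, c, d])
      (by simp [Fin.forall_fin_succ, ha, hb, hc, hd])

end IsKFun

theorem isKFun_const_mul {c : ℝ} (hc : 0 < c) : IsKFun fun s => c * s :=
  ⟨continuousOn_const.mul continuousOn_id, fun _ _ _ _ hab => mul_lt_mul_of_pos_left hab hc,
    mul_zero c⟩

namespace IsLFun

variable {φ ψ : ℝ → ℝ}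

theorem nonneg (hφ : IsLFun φ) {t : ℝ} (ht : 0 ≤ t) : 0 ≤ φ t :=
  le_of_tendsto hφ.2.2 <| by
    filter_upwards [eventually_ge_atTop t] with u hu
    exact hφ.2.1 ht (ht.trans hu) hu

theorem const_mul (hφ : IsLFun φ) {c : ℝ} (hc : 0 ≤ c) : IsLFun fun t => c * φ t :=
  ⟨continuousOn_const.mul hφ.1,
    fun _ ha _ hb hab => mul_le_mul_of_nonneg_left (hφ.2.1 ha hb hab) hc,
    by simpa using hφ.2.2.const_mul c⟩

theorem add (hφ : IsLFun φ) (hψ : IsLFun ψ) : IsLFun fun t => φ t + ψ t :=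
  ⟨hφ.1.add hψ.1, fun _ ha _ hb hab => add_le_add (hφ.2.1 ha hb hab) (hψ.2.1 ha hb hab),
    by simpa using hφ.2.2.add hψ.2.2⟩

end IsLFun

theorem IsKFun.comp_isLFun {κ φ : ℝ → ℝ} (hκ : IsKFun κ) (hφ : IsLFun φ) :
    IsLFun fun t => κ (φ t) := by
  have hmaps : MapsTo φ (Ici 0) (Ici 0) := fun _ ht => hφ.nonneg ht
  refine ⟨hκ.1.comp hφ.1 hmaps,
    fun _ ha _ hb hab => hκ.mono (hφ.nonneg hb) (hφ.2.1 ha hb hab), ?_⟩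
  have hφ' : Tendsto φ atTop (𝓝[Ici 0] 0) :=
    tendsto_nhdsWithin_iff.mpr ⟨hφ.2.2, eventually_atTop.mpr ⟨0, fun _ ht => hmaps ht⟩⟩
  have := (hκ.1 0 self_mem_Ici).tendsto.comp hφ'
  rwa [hκ.2.2] at this

theorem isKLFun_mul_add_comp_mul {c m κ φ₁ φ₂ : ℝ → ℝ} (hc : IsKFun c) (hm : IsKFun m)
    (hκ : IsKFun κ) (hφ₁ : IsLFun φ₁) (hφ₂ : IsLFun φ₂) (hφ₂pos : ∀ t, 0 ≤ t → 0 < φ₂ t) :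
    IsKLFun fun s t => c s * φ₁ t + κ (m s * φ₂ t) :=
  ⟨fun t ht => hc.mul_const_add (hφ₁.nonneg ht) (hκ.comp (hm.mul_const (hφ₂pos t ht))),
    fun _ hs =>
      (hφ₁.const_mul (hc.nonneg hs)).add (hκ.comp_isLFun (hφ₂.const_mul (hm.nonneg hs)))⟩

theorem StrictMonoOn.continuousOn_Ici_of_surjOn {ι : ℝ → ℝ} {a : ℝ}
    (hmono : StrictMonoOn ι (Ici a)) (hsurj : SurjOn ι (Ici a) (Ici (ι a))) :
    ContinuousOn ι (Ici a) := by
  intro b hb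
  rcases (mem_Ici.mp hb).eq_or_lt with rfl | hab
  · exact hmono.continuousWithinAt_right_of_surjOn self_mem_nhdsWithin
      (hsurj.mono Subset.rfl Ioi_subset_Ici_self)
  · have hιb : ι a < ι b := hmono self_mem_Ici hb hab
    exact (hmono.continuousAt_of_image_mem_nhds (Ici_mem_nhds hab)
      (mem_of_superset (Ici_mem_nhds hιb) hsurj)).continuousWithinAt

def IsNonnegRightInv (ι γ : ℝ → ℝ) : Prop :=
  ∀ r, 0 ≤ r → γ (ι r) = r ∧ 0 ≤ ι r

namespace IsNonnegRightInv

variable {γ ι : ℝ → ℝ}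

theorem le_of_apply_le (hι : IsNonnegRightInv ι γ) (hγ : IsKFun γ) {s r : ℝ} (hs : 0 ≤ s)
    (hr : 0 ≤ r) (h : γ s ≤ r) : s ≤ ι r := by
  rw [← (hι r hr).1] at h
  exact (hγ.2.1.le_iff_le hs (hι r hr).2).mp h

theorem isKFun (hι : IsNonnegRightInv ι γ) (hγ : IsKFun γ) : IsKFun ι := by
  have hleft : ∀ s, 0 ≤ s → ι (γ s) = s := fun s hs =>
    hγ.2.1.injOn (hι _ (hγ.nonneg hs)).2 hs (hι _ (hγ.nonneg hs)).1
  have hmono : StrictMonoOn ι (Ici 0) := fun a ha b hb hab =>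
    (hγ.2.1.lt_iff_lt (hι a ha).2 (hι b hb).2).mp (by rwa [(hι a ha).1, (hι b hb).1])
  have h0 : ι 0 = 0 := by simpa [hγ.2.2] using hleft 0 le_rfl
  refine ⟨hmono.continuousOn_Ici_of_surjOn ?_, hmono, h0⟩
  rw [h0]
  exact fun s hs => ⟨γ s, hγ.nonneg hs, hleft s hs⟩

end IsNonnegRightInv

theorem IsKInftyFun.exists_isNonnegRightInv {γ : ℝ → ℝ} (hγ : IsKInftyFun γ) :
    ∃ ι, IsKFun ι ∧ IsNonnegRightInv ι γ := by
  have hsurj : ∀ r, 0 ≤ r → ∃ s, γ s = r ∧ 0 ≤ s := fun r hr => by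
    obtain ⟨s, hs, hγs⟩ := intermediate_value_Ici hγ.1.1 hγ.2
      (show r ∈ Ici (γ 0) by rwa [hγ.1.2.2])
    exact ⟨s, hγs, hs⟩
  choose! ι hι using hsurj
  exact ⟨ι, IsNonnegRightInv.isKFun hι hγ.1, hι⟩

theorem seqSup_nonneg {E : Type*} [SeminormedAddGroup E] (z : ℕ → E) (m : ℕ) :
    0 ≤ seqSup z m :=
  NNReal.coe_nonneg _

theorem seqSup_le_add {E : Type*} [SeminormedAddGroup E] {z z₁ z₂ : ℕ → E}
    (h : ∀ i, ‖z i‖ ≤ ‖z₁ i‖ + ‖z₂ i‖) (m : ℕ) : seqSup z m ≤ seqSup z₁ m + seqSup z₂ m := by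
  rw [seqSup, seqSup, seqSup, ← NNReal.coe_add, NNReal.coe_le_coe]
  exact Finset.sup_le fun i hi => (h i).trans
    (add_le_add (Finset.le_sup (f := fun i => ‖z₁ i‖₊) hi)
      (Finset.le_sup (f := fun i => ‖z₂ i‖₊) hi))

theorem ioss_bound_le {X W Y : Type*} [SeminormedAddCommGroup X] [SeminormedAddGroup W]
    [SeminormedAddCommGroup Y] {μ α₁ α₂ : ℝ → ℝ} (hμ : IsKFun μ) (hα₁ : IsKFun α₁)
    (hα₂ : IsKFun α₂) {q : ℝ} (hq : 0 ≤ q) {x₀ χ₀ : X} (p₀ : X) {w ω : ℕ → W} {y y' : ℕ → Y}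
    (v : ℕ → Y) {m k : ℕ} :
    μ ‖x₀ - χ₀‖ * q + α₁ (seqSup (fun i => w i - ω i) m)
        + α₂ (seqSup (fun i => y i - y' i) k) ≤
      μ (‖x₀ - p₀‖ + ‖χ₀ - p₀‖) * q + α₁ (seqSup w m + seqSup ω m)
        + α₂ (seqSup (fun i => y i + v i - y' i) k + seqSup v k) := by
  have hx : ‖x₀ - χ₀‖ ≤ ‖x₀ - p₀‖ + ‖χ₀ - p₀‖ := by
    simpa only [dist_eq_norm] using dist_triangle_right x₀ χ₀ p₀
  have hw := seqSup_le_add (z₁ := w) (z₂ := ω) (fun i => norm_sub_le _ _) m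
  have hy : seqSup (fun i => y i - y' i) k ≤
      seqSup (fun i => y i + v i - y' i) k + seqSup v k :=
    seqSup_le_add (fun i => by
      simpa [add_sub_right_comm] using norm_sub_le (y i + v i - y' i) (v i)) k
  gcongr
  · exact hμ.mono (norm_nonneg _) hx
  · exact hα₁.mono (seqSup_nonneg _ _) hw
  · exact hα₂.mono (seqSup_nonneg _ _) hy

-- With `ι₁ = γ̲_w⁻¹` and `ι₂ = γ̲_v⁻¹`, this bounds `α₁(2‖ω‖) + α₂(2‖ν‖)` for any candidate whose
-- cost is at most `r`.
def noiseGain (α₁ α₂ ι₁ ι₂ : ℝ → ℝ) (r : ℝ) : ℝ :=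
  α₁ (2 * ι₁ r) + α₂ (2 * ι₂ r)

theorem IsKFun.noiseGain {α₁ α₂ ι₁ ι₂ : ℝ → ℝ} (hα₁ : IsKFun α₁) (hα₂ : IsKFun α₂)
    (hι₁ : IsKFun ι₁) (hι₂ : IsKFun ι₂) : IsKFun (noiseGain α₁ α₂ ι₁ ι₂) :=
  (hα₁.comp ((isKFun_const_mul two_pos).comp hι₁)).add
    (hα₂.comp ((isKFun_const_mul two_pos).comp hι₂))

-- `s, sw, sv`: sizes of the true initial offset and disturbances; `D, Sw, Sv`: those of the
-- estimate; `a * r + b + c`: the upper cost bound at the truth, with `q = φ₁(t)`, `r = φ₂(t)`.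
theorem error_le_of_cost_le {μ₁ μ₂ ι₂ γw γv ιw ιv α₁ α₂ : ℝ → ℝ}
    (hμ₁ : IsKFun μ₁) (hμ₂ : IsKFun μ₂) (hι₂ : IsKFun ι₂) (hι₂inv : IsNonnegRightInv ι₂ μ₂)
    (hγw : IsKFun γw) (hιw : IsKFun ιw) (hιwinv : IsNonnegRightInv ιw γw)
    (hγv : IsKFun γv) (hιv : IsKFun ιv) (hιvinv : IsNonnegRightInv ιv γv)
    (hα₁ : IsKFun α₁) (hα₂ : IsKFun α₂)
    {s D sw Sw sv Sv a b c q r e : ℝ} (hs : 0 ≤ s) (hD : 0 ≤ D) (hsw : 0 ≤ sw) (hSw : 0 ≤ Sw)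
    (hsv : 0 ≤ sv) (hSv : 0 ≤ Sv) (ha : 0 ≤ a) (hb : 0 ≤ b) (hc : 0 ≤ c) (hq : 0 ≤ q)
    (hr : 0 < r)
    (hcost : μ₂ D * r + γw Sw + γv Sv ≤ a * r + b + c)
    (hioss : e ≤ μ₁ (s + D) * q + α₁ (sw + Sw) + α₂ (Sv + sv))
    {pw pv : ℝ} (hpw : μ₁ (4 * ι₂ (3 * b / r)) * q ≤ pw)
    (hpv : μ₁ (4 * ι₂ (3 * c / r)) * q ≤ pv) :
    e ≤ (μ₁ (4 * s) + μ₁ (4 * ι₂ (3 * a))) * q + noiseGain α₁ α₂ ιw ιv (3 * (a * r))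
      + (pw + α₁ (2 * sw) + noiseGain α₁ α₂ ιw ιv (3 * b))
      + (pv + α₂ (2 * sv) + noiseGain α₁ α₂ ιw ιv (3 * c)) := by
  have hR : 0 ≤ a * r + b + c := by positivity
  have hμ₂D := mul_nonneg (hμ₂.nonneg hD) hr.le
  have hγwSw := hγw.nonneg hSw
  have hγvSv := hγv.nonneg hSv
  have hDle : D ≤ ι₂ (a + b / r + c / r) := by
    refine hι₂inv.le_of_apply_le hμ₂ hD (by positivity) ?_
    rw [show a + b / r + c / r = (a * r + b + c) / r by field_simp, le_div_iff₀ hr]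
    linarith
  have hSwle : Sw ≤ ιw (a * r + b + c) := hιwinv.le_of_apply_le hγw hSw hR (by linarith)
  have hSvle : Sv ≤ ιv (a * r + b + c) := hιvinv.le_of_apply_le hγv hSv hR (by linarith)
  have hinit : μ₁ (s + D) ≤
      μ₁ (4 * s) + μ₁ (4 * ι₂ (3 * a)) + μ₁ (4 * ι₂ (3 * b / r)) + μ₁ (4 * ι₂ (3 * c / r)) := by
    have hbr : 0 ≤ b / r := by positivity
    have hcr : 0 ≤ c / r := by positivity
    have := hι₂.apply_add_add_le ha hbr hcr
    rw [← mul_div_assoc, ← mul_div_assoc] at this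
    calc μ₁ (s + D) ≤ μ₁ (s + ι₂ (3 * a) + ι₂ (3 * b / r) + ι₂ (3 * c / r)) :=
          hμ₁.mono (by positivity) (by linarith)
      _ ≤ _ := hμ₁.apply_add_add_add_le hs (hι₂.nonneg (by positivity))
          (hι₂.nonneg (by positivity)) (hι₂.nonneg (by positivity))
  have hnoise_w : α₁ (sw + Sw) ≤ α₁ (2 * sw) + α₁ (2 * ιw (a * r + b + c)) :=
    (hα₁.apply_add_le hsw hSw).trans (by gcongr; exact hα₁.mono (by positivity) (by linarith))
  have hnoise_v : α₂ (Sv + sv) ≤ α₂ (2 * ιv (a * r + b + c)) + α₂ (2 * sv) :=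
    (hα₂.apply_add_le hSv hsv).trans (by gcongr; exact hα₂.mono (by positivity) (by linarith))
  have hgain :=
    (IsKFun.noiseGain hα₁ hα₂ hιw hιv).apply_add_add_le (a := a * r) (by positivity) hb hc
  have hinit_q := mul_le_mul_of_nonneg_right hinit hq
  simp only [noiseGain] at hgain ⊢
  linarith

theorem fie_rgas_of_KdotL_bounds_general
    (n g p : ℕ)
    (f : EuclideanSpace ℝ (Fin n) → EuclideanSpace ℝ (Fin g) → EuclideanSpace ℝ (Fin n))
    (h : EuclideanSpace ℝ (Fin n) → EuclideanSpace ℝ (Fin p))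
    -- the K·L comparison functions of condition (c)
    (μ₁ μ₂ μ₃ : ℝ → ℝ) (φ₁ φ₂ : ℝ → ℝ)
    (hμ₁ : IsKFun μ₁) (hμ₂ : IsKInftyFun μ₂) (hμ₃ : IsKFun μ₃)
    (hφ₁ : IsLFun φ₁) (hφ₂ : IsLFun φ₂) (hφ₂pos : ∀ t : ℝ, 0 ≤ t → 0 < φ₂ t)
    -- (a) i-IOSS of the system with KL-function β(s,t) = μ₁(s)·φ₁(t)
    (α₁ α₂ : ℝ → ℝ) (hα₁ : IsKFun α₁) (hα₂ : IsKFun α₂)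
    (hIOSS : ∀ (x01 x02 : EuclideanSpace ℝ (Fin n)) (w1 w2 : ℕ → EuclideanSpace ℝ (Fin g))
      (t : ℕ),
      ‖traj f x01 w1 t - traj f x02 w2 t‖ ≤
        μ₁ ‖x01 - x02‖ * φ₁ t + α₁ (seqSup (fun i => w1 i - w2 i) t)
          + α₂ (seqSup (fun i => h (traj f x01 w1 i) - h (traj f x02 w2 i)) (t + 1)))
    -- remaining comparison functions of Assumption 1
    (γₗw γₗv γᵤw γᵤv : ℝ → ℝ)
    (hγₗw : IsKInftyFun γₗw) (hγₗv : IsKInftyFun γₗv)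
    (hγᵤw : IsKInftyFun γᵤw) (hγᵤv : IsKInftyFun γᵤv)
    -- μ₂⁻¹ : the inverse on [0,∞) of μ₂
    (μ₂inv : ℝ → ℝ)
    (hμ₂inv₂ : ∀ r : ℝ, 0 ≤ r → μ₂ (μ₂inv r) = r ∧ 0 ≤ μ₂inv r)
    -- (c) the key sensitivity condition
    (hkey : ∀ π : ℝ → ℝ, IsKFun π → ∃ π' : ℝ → ℝ, IsKFun π' ∧
      ∀ s t : ℝ, 0 ≤ s → 0 ≤ t → μ₁ (4 * μ₂inv (π s / φ₂ t)) * φ₁ t ≤ π' s) :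
    -- RGAS of the FIE
    ∃ βx : ℝ → ℝ → ℝ, ∃ αw αv : ℝ → ℝ, IsKLFun βx ∧ IsKFun αw ∧ IsKFun αv ∧
      ∀ (x0 xbar0 : EuclideanSpace ℝ (Fin n)) (w : ℕ → EuclideanSpace ℝ (Fin g))
        (v : ℕ → EuclideanSpace ℝ (Fin p)),
        (∃ Mw : ℝ, ∀ i, ‖w i‖ ≤ Mw) → (∃ Mv : ℝ, ∀ i, ‖v i‖ ≤ Mv) →
        ∀ (V : ℕ → EuclideanSpace ℝ (Fin n) → (ℕ → EuclideanSpace ℝ (Fin g)) → ℝ)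
          (xhat0 : ℕ → EuclideanSpace ℝ (Fin n)) (what : ℕ → ℕ → EuclideanSpace ℝ (Fin g)),
          -- (b) Assumption 1 with ρ̲ₓ(s,t) = μ₂(s)φ₂(t) and ρₓ(s,t) = μ₃(s)φ₂(t),
          -- the fitted noise of a candidate (χ0, ω) being
          -- ν(i) = h(x(i; x0, w)) + v(i) - h(x(i; χ0, ω))
          (∀ (t : ℕ) (χ0 : EuclideanSpace ℝ (Fin n)) (ω : ℕ → EuclideanSpace ℝ (Fin g)),
            μ₂ ‖χ0 - xbar0‖ * φ₂ t + γₗw (seqSup ω t)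
              + γₗv (seqSup
                  (fun i => (h (traj f x0 w i) + v i) - h (traj f χ0 ω i)) (t + 1))
              ≤ V t χ0 ω ∧
            V t χ0 ω ≤ μ₃ ‖χ0 - xbar0‖ * φ₂ t + γᵤw (seqSup ω t)
              + γᵤv (seqSup
                  (fun i => (h (traj f x0 w i) + v i) - h (traj f χ0 ω i)) (t + 1))) →
          -- (b) the infimum is attainable: optimality of (xhat0 t, what t)
          (∀ t : ℕ, V t (xhat0 t) (what t) ≤ V t x0 w) →
          ∀ t : ℕ,
            ‖traj f x0 w t - traj f (xhat0 t) (what t) t‖ ≤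
              βx ‖x0 - xbar0‖ t + αw (seqSup w t) + αv (seqSup v (t + 1)) := by
  obtain ⟨ιw, hιw, hιwinv⟩ := hγₗw.exists_isNonnegRightInv
  obtain ⟨ιv, hιv, hιvinv⟩ := hγₗv.exists_isNonnegRightInv
  have hμ₂inv := IsNonnegRightInv.isKFun hμ₂inv₂ hμ₂.1
  have hgain := IsKFun.noiseGain hα₁ hα₂ hιw hιv
  have h3 := isKFun_const_mul (show (0 : ℝ) < 3 by norm_num)
  have h4 := isKFun_const_mul (show (0 : ℝ) < 4 by norm_num)
  obtain ⟨Pw, hPw, hPw_le⟩ := hkey _ (h3.comp hγᵤw.1)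
  obtain ⟨Pv, hPv, hPv_le⟩ := hkey _ (h3.comp hγᵤv.1)
  refine ⟨fun s t => (μ₁ (4 * s) + μ₁ (4 * μ₂inv (3 * μ₃ s))) * φ₁ t
      + noiseGain α₁ α₂ ιw ιv (3 * (μ₃ s * φ₂ t)),
    fun s => Pw s + α₁ (2 * s) + noiseGain α₁ α₂ ιw ιv (3 * γᵤw s),
    fun s => Pv s + α₂ (2 * s) + noiseGain α₁ α₂ ιw ιv (3 * γᵤv s),
    isKLFun_mul_add_comp_mul
      ((hμ₁.comp h4).add (hμ₁.comp (h4.comp (hμ₂inv.comp (h3.comp hμ₃)))))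
      hμ₃ (hgain.comp h3) hφ₁ hφ₂ hφ₂pos,
    (hPw.add (hα₁.comp (isKFun_const_mul two_pos))).add (hgain.comp (h3.comp hγᵤw.1)),
    (hPv.add (hα₂.comp (isKFun_const_mul two_pos))).add (hgain.comp (h3.comp hγᵤv.1)), ?_⟩
  intro x0 xbar0 w v _ _ V xhat0 what hV hopt t
  have hcost := (hV t (xhat0 t) (what t)).1.trans ((hopt t).trans (hV t x0 w).2)
  simp only [add_sub_cancel_left] at hcost
  have hioss := (hIOSS x0 (xhat0 t) w (what t) t).trans
    (ioss_bound_le hμ₁ hα₁ hα₂ (hφ₁.nonneg t.cast_nonneg) xbar0 v)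
  exact error_le_of_cost_le hμ₁ hμ₂.1 hμ₂inv hμ₂inv₂ hγₗw.1 hιw hιwinv hγₗv.1 hιv hιvinv hα₁ hα₂
    (norm_nonneg _) (norm_nonneg _) (seqSup_nonneg _ _) (seqSup_nonneg _ _) (seqSup_nonneg _ _)
    (seqSup_nonneg _ _) (hμ₃.nonneg (norm_nonneg _)) (hγᵤw.1.nonneg (seqSup_nonneg _ _))
    (hγᵤv.1.nonneg (seqSup_nonneg _ _)) (hφ₁.nonneg t.cast_nonneg) (hφ₂pos _ t.cast_nonneg)
    hcost hioss (hPw_le _ _ (seqSup_nonneg _ _) t.cast_nonneg)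
    (hPv_le _ _ (seqSup_nonneg _ _) t.cast_nonneg)

/-- (Corollary 1.)  The FIE is RGAS if the system is i-IOSS, the cost satisfies
Assumption 1, its infimum is attainable, and the bounds β, ρ̲ₓ, ρₓ are
K·L-functions `μ₁(s)φ₁(t)`, `μ₂(s)φ₂(t)`, `μ₃(s)φ₂(t)` satisfying the key
sensitivity condition. -/
theorem fie_rgas_of_KdotL_bounds
    (n g p : ℕ)
    (f : EuclideanSpace ℝ (Fin n) → EuclideanSpace ℝ (Fin g) → EuclideanSpace ℝ (Fin n))
    (h : EuclideanSpace ℝ (Fin n) → EuclideanSpace ℝ (Fin p))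
    (hf : Continuous fun q : EuclideanSpace ℝ (Fin n) × EuclideanSpace ℝ (Fin g) => f q.1 q.2)
    (hh : Continuous h)
    -- the K·L comparison functions of condition (c)
    (μ₁ μ₂ μ₃ : ℝ → ℝ) (φ₁ φ₂ : ℝ → ℝ)
    (hμ₁ : IsKFun μ₁) (hμ₂ : IsKInftyFun μ₂) (hμ₃ : IsKFun μ₃)
    (hφ₁ : IsLFun φ₁) (hφ₂ : IsLFun φ₂) (hφ₂pos : ∀ t : ℝ, 0 ≤ t → 0 < φ₂ t)
    (hβKL : IsKLFun fun s t => μ₁ s * φ₁ t)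
    (hρₗKL : IsKLFun fun s t => μ₂ s * φ₂ t)
    (hρᵤKL : IsKLFun fun s t => μ₃ s * φ₂ t)
    (hρₗKinf : ∀ t : ℝ, 0 ≤ t → IsKInftyFun fun s => μ₂ s * φ₂ t)
    -- (a) i-IOSS of the system with KL-function β(s,t) = μ₁(s)·φ₁(t)
    (α₁ α₂ : ℝ → ℝ) (hα₁ : IsKFun α₁) (hα₂ : IsKFun α₂)
    (hIOSS : ∀ (x01 x02 : EuclideanSpace ℝ (Fin n)) (w1 w2 : ℕ → EuclideanSpace ℝ (Fin g))
      (t : ℕ),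
      ‖traj f x01 w1 t - traj f x02 w2 t‖ ≤
        μ₁ ‖x01 - x02‖ * φ₁ t + α₁ (seqSup (fun i => w1 i - w2 i) t)
          + α₂ (seqSup (fun i => h (traj f x01 w1 i) - h (traj f x02 w2 i)) (t + 1)))
    -- remaining comparison functions of Assumption 1
    (γₗw γₗv γᵤw γᵤv : ℝ → ℝ)
    (hγₗw : IsKInftyFun γₗw) (hγₗv : IsKInftyFun γₗv)
    (hγᵤw : IsKInftyFun γᵤw) (hγᵤv : IsKInftyFun γᵤv)
    -- μ₂⁻¹ : the inverse on [0,∞) of μ₂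
    (μ₂inv : ℝ → ℝ)
    (hμ₂inv₁ : ∀ s : ℝ, 0 ≤ s → μ₂inv (μ₂ s) = s)
    (hμ₂inv₂ : ∀ r : ℝ, 0 ≤ r → μ₂ (μ₂inv r) = r ∧ 0 ≤ μ₂inv r)
    -- (c) the key sensitivity condition
    (hkey : ∀ π : ℝ → ℝ, IsKFun π → ∃ π' : ℝ → ℝ, IsKFun π' ∧
      ∀ s t : ℝ, 0 ≤ s → 0 ≤ t → μ₁ (4 * μ₂inv (π s / φ₂ t)) * φ₁ t ≤ π' s) :
    -- RGAS of the FIE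
    ∃ βx : ℝ → ℝ → ℝ, ∃ αw αv : ℝ → ℝ, IsKLFun βx ∧ IsKFun αw ∧ IsKFun αv ∧
      ∀ (x0 xbar0 : EuclideanSpace ℝ (Fin n)) (w : ℕ → EuclideanSpace ℝ (Fin g))
        (v : ℕ → EuclideanSpace ℝ (Fin p)),
        (∃ Mw : ℝ, ∀ i, ‖w i‖ ≤ Mw) → (∃ Mv : ℝ, ∀ i, ‖v i‖ ≤ Mv) →
        ∀ (V : ℕ → EuclideanSpace ℝ (Fin n) → (ℕ → EuclideanSpace ℝ (Fin g)) → ℝ)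
          (xhat0 : ℕ → EuclideanSpace ℝ (Fin n)) (what : ℕ → ℕ → EuclideanSpace ℝ (Fin g)),
          -- (b) Assumption 1 with ρ̲ₓ(s,t) = μ₂(s)φ₂(t) and ρₓ(s,t) = μ₃(s)φ₂(t),
          -- the fitted noise of a candidate (χ0, ω) being
          -- ν(i) = h(x(i; x0, w)) + v(i) - h(x(i; χ0, ω))
          (∀ (t : ℕ) (χ0 : EuclideanSpace ℝ (Fin n)) (ω : ℕ → EuclideanSpace ℝ (Fin g)),
            μ₂ ‖χ0 - xbar0‖ * φ₂ t + γₗw (seqSup ω t)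
              + γₗv (seqSup
                  (fun i => (h (traj f x0 w i) + v i) - h (traj f χ0 ω i)) (t + 1))
              ≤ V t χ0 ω ∧
            V t χ0 ω ≤ μ₃ ‖χ0 - xbar0‖ * φ₂ t + γᵤw (seqSup ω t)
              + γᵤv (seqSup
                  (fun i => (h (traj f x0 w i) + v i) - h (traj f χ0 ω i)) (t + 1))) →
          -- (b) the infimum is attainable: optimality of (xhat0 t, what t)
          (∀ t : ℕ, V t (xhat0 t) (what t) ≤ V t x0 w) →
          ∀ t : ℕ,
            ‖traj f x0 w t - traj f (xhat0 t) (what t) t‖ ≤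
              βx ‖x0 - xbar0‖ t + αw (seqSup w t) + αv (seqSup v (t + 1)) :=
  fie_rgas_of_KdotL_bounds_general n g p f h μ₁ μ₂ μ₃ φ₁ φ₂ hμ₁ hμ₂ hμ₃ hφ₁ hφ₂ hφ₂pos α₁ α₂ hα₁ hα₂
    hIOSS γₗw γₗv γᵤw γᵤv hγₗw hγₗv hγᵤw hγᵤv μ₂inv hμ₂inv₂ hkey
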